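/- Let s = (s_1,...,s_k) be an injective sequence in [n] with k ≥ 2, and let s' be the sequence obtained from s by swapping the last two entries s_{k-1} and s_k. With Y defined by the explicit Laurent formula of Corollary 4.2, the identity Y_{s'(k-1)} · Y_{s(k-1)} − Y_{s(k-2)} · Y_s = (∏_{r=1}^{k-2} A_{s_r})^2 · (∏_{ρ∈[n]∖{s_1,...,s_k}} X_ρ)^2 holds in Frac(Z[A_1,...,A_n, X_1,...,X_n]). -/

import Mathlib

open Finset

/-- The ambient field `F = Frac(ℤ[A_1,...,A_n, X_1,...,X_n])`. -/
abbrev Kn (n : ℕ) := FractionRing (MvPolynomial (Fin n ⊕ Fin n) ℤ)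

/-- The coefficient `A_i` as an element of the ambient field. -/
noncomputable def Av (n : ℕ) (i : Fin n) : Kn n :=
  algebraMap (MvPolynomial (Fin n ⊕ Fin n) ℤ) (Kn n) (MvPolynomial.X (Sum.inl i))

/-- The initial cluster variable `X_i` as an element of the ambient field. -/
noncomputable def Xv (n : ℕ) (i : Fin n) : Kn n :=
  algebraMap (MvPolynomial (Fin n ⊕ Fin n) ℤ) (Kn n) (MvPolynomial.X (Sum.inr i))

/-- The explicit Laurent formula for the cluster variable `Y_s` (Corollary 4.2). -/
noncomputable def Yvar {F : Type*} [Field F] {n : ℕ} (A X : Fin n → F) {k : ℕ}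
    (s : Fin k → Fin n) : F :=
  ((∑ i : Fin k, (∏ j ∈ univ.erase i, A (s j)) * ∏ j ∈ univ.erase (s i), X j) +
      ∏ i : Fin k, A (s i)) / ∏ i : Fin k, X (s i)

/-! With `P = ∏ⱼ Xⱼ`, the Laurent formula reads `Y_t = a_t (1 + P σ_t) / x_t`, where
`a_t = ∏ A_{tᵢ}`, `x_t = ∏ X_{tᵢ}` and `σ_t = ∑ (A_{tᵢ} X_{tᵢ})⁻¹`. Appending an entry `c`
multiplies `a` by `A_c`, `x` by `X_c` and adds `(A_c X_c)⁻¹` to `σ`. Hence both products in the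
exchange relation carry the same factor, and what remains is
`(1 + w + p)(1 + w + q) - (1 + w)(1 + w + p + q) = p q` with `p = P / (A_a X_a)` and
`q = P / (A_b X_b)`. -/

section

variable {F : Type*} [Field F] {n : ℕ} {A X : Fin n → F}

theorem Yvar_eq (hA : ∀ i, A i ≠ 0) (hX : ∀ i, X i ≠ 0) {m : ℕ} (t : Fin m → Fin n) :
    Yvar A X t = (∏ i, A (t i)) * ((∏ j, X j) * ∑ i, (A (t i) * X (t i))⁻¹ + 1) /
      ∏ i, X (t i) := by
  unfold Yvar
  congr 1
  rw [mul_add, mul_one, add_left_inj, Finset.mul_sum, Finset.mul_sum]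
  refine Finset.sum_congr rfl fun i _ => ?_
  rw [← Finset.prod_erase_mul _ _ (mem_univ i), ← Finset.prod_erase_mul _ _ (mem_univ (t i))]
  field_simp [hA (t i), hX (t i)]

theorem Yvar_snoc_mul_Yvar_snoc_sub (hA : ∀ i, A i ≠ 0) (hX : ∀ i, X i ≠ 0) {k : ℕ}
    (u : Fin k → Fin n) (a b : Fin n) :
    Yvar A X (Fin.snoc u b : Fin (k + 1) → Fin n) *
        Yvar A X (Fin.snoc u a : Fin (k + 1) → Fin n) -
      Yvar A X u *
        Yvar A X (Fin.snoc (Fin.snoc u a : Fin (k + 1) → Fin n) b : Fin (k + 2) → Fin n) =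
      (∏ r, A (u r)) ^ 2 * ((∏ j, X j) / ((∏ r, X (u r)) * X a * X b)) ^ 2 := by
  have hXu : ∏ r, X (u r) ≠ 0 := prod_ne_zero_iff.mpr fun r _ => hX (u r)
  simp only [Yvar_eq hA hX, Fin.prod_univ_castSucc, Fin.sum_univ_castSucc, Fin.snoc_castSucc,
    Fin.snoc_last]
  field_simp [hA a, hA b, hX a, hX b]
  ring

theorem prod_compl_image_eq_div {M : Type*} [Fintype M] [DecidableEq M] {ι : Type*} [Fintype ι]
    {f : ι → M} (hf : Function.Injective f) {g : M → F} (hg : ∀ i, g i ≠ 0) :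
    ∏ x ∈ univ \ image f univ, g x = (∏ x, g x) / ∏ i, g (f i) := by
  rw [eq_div_iff (prod_ne_zero_iff.mpr fun i _ => hg (f i)), ← prod_image fun a _ b _ h => hf h]
  exact prod_sdiff (subset_univ _)

end

theorem Av_ne_zero (n : ℕ) (i : Fin n) : Av n i ≠ 0 :=
  IsFractionRing.to_map_eq_zero_iff.not.mpr (MvPolynomial.X_ne_zero _)

theorem Xv_ne_zero (n : ℕ) (i : Fin n) : Xv n i ≠ 0 :=
  IsFractionRing.to_map_eq_zero_iff.not.mpr (MvPolynomial.X_ne_zero _)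

-- The sequence has length `k + 2`, so the paper's prefix `s(k-2)` has length `k` here.
/-- Swapping the last two entries of an activation sequence is a mutation:
`Y_{s'(k-1)}·Y_{s(k-1)} − Y_{s(k-2)}·Y_s = (∏_{r=1}^{k-2} A_{s_r})²·(∏_{ρ∉s} X_ρ)²`
(here the sequence has length `k+2`, so "k−2" is `k`). -/
theorem stmt6 (n k : ℕ) (s : Fin (k + 2) → Fin n) (hs : Function.Injective s)
    (s' : Fin (k + 2) → Fin n)
    (hs' : s' = s ∘ Equiv.swap ⟨k, by omega⟩ ⟨k + 1, by omega⟩) :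
    Yvar (Av n) (Xv n) (fun i : Fin (k + 1) => s' i.castSucc) *
        Yvar (Av n) (Xv n) (fun i : Fin (k + 1) => s i.castSucc) -
      Yvar (Av n) (Xv n) (fun i : Fin k => s (Fin.castLE (by omega) i)) *
        Yvar (Av n) (Xv n) s =
      (∏ r : Fin k, Av n (s (Fin.castLE (by omega) r))) ^ 2 *
        (∏ ρ ∈ univ \ image s univ, Xv n ρ) ^ 2 := by
  set u : Fin k → Fin n := fun i => s (Fin.castLE (by omega) i)
  have h_init : Fin.snoc u (s ⟨k, by omega⟩) = fun i : Fin (k + 1) => s i.castSucc := by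
    refine Fin.lastCases ?_ (fun i => ?_) |> funext
    · simp only [Fin.snoc_last]; rfl
    · simp only [Fin.snoc_castSucc]; rfl
  have h_swap : (fun i : Fin (k + 1) => s' i.castSucc) = Fin.snoc u (s (Fin.last _)) := by
    subst hs'
    refine Fin.lastCases ?_ (fun i => ?_) |> funext
    · simp only [Fin.snoc_last, Function.comp_apply]
      exact congrArg s (Equiv.swap_apply_left _ _)
    · simp only [Fin.snoc_castSucc, Function.comp_apply]
      refine congrArg s (Equiv.swap_apply_of_ne_of_ne ?_ ?_) <;> simp [Fin.ext_iff] <;> omega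
  have key := Yvar_snoc_mul_Yvar_snoc_sub (Av_ne_zero n) (Xv_ne_zero n) u (s ⟨k, by omega⟩)
    (s (Fin.last _))
  have hs_snoc : Fin.snoc (fun i : Fin (k + 1) => s i.castSucc) (s (Fin.last _)) = s :=
    Fin.snoc_init_self s
  rw [h_init, hs_snoc] at key
  rw [h_swap, key, prod_compl_image_eq_div hs (Xv_ne_zero n), Fin.prod_univ_castSucc,
    Fin.prod_univ_castSucc]
  rfl
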